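/- Let r(a,b) = (a⁶+1)(b²+1)² + (a⁵+a)(4b⁴−8b³−8b−4) + (a⁴+a²)(5b⁴−4b³+2b²+4b+5) + a³(4b⁴−4). Then for every a > 0 and every b > 1 the partial derivative ∂r/∂b(a,b) is strictly positive. -/
import Mathlib


noncomputable def rPoly (a b : ℝ) : ℝ :=
  (a^6 + 1) * (b^2 + 1)^2 + (a^5 + a) * (4*b^4 - 8*b^3 - 8*b - 4)
    + (a^4 + a^2) * (5*b^4 - 4*b^3 + 2*b^2 + 4*b + 5) + a^3 * (4*b^4 - 4)

theorem rPoly_partial_b_pos (a b : ℝ) (ha : 0 < a) (hb : 1 < b) :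
    0 < deriv (fun b' => rPoly a b') b := by
  have hd : HasDerivAt (fun b' => rPoly a b')
      ((a^6+1)*(4*b^3+4*b) + (a^5+a)*(16*b^3-24*b^2-8)
        + (a^4+a^2)*(20*b^3-12*b^2+4*b+4) + a^3*(16*b^3)) b := by
    have h : HasDerivAt (fun b' : ℝ =>
        ((a^6+1) + (a^5+a)*4 + (a^4+a^2)*5 + a^3*4) * b'^4
        + ((a^5+a)*(-8) + (a^4+a^2)*(-4)) * b'^3
        + ((a^6+1)*2 + (a^4+a^2)*2) * b'^2
        + ((a^5+a)*(-8) + (a^4+a^2)*4) * b'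
        + ((a^6+1) + (a^5+a)*(-4) + (a^4+a^2)*5 + a^3*(-4)))
        (((a^6+1) + (a^5+a)*4 + (a^4+a^2)*5 + a^3*4) * (4*b^3)
        + ((a^5+a)*(-8) + (a^4+a^2)*(-4)) * (3*b^2)
        + ((a^6+1)*2 + (a^4+a^2)*2) * (2*b)
        + ((a^5+a)*(-8) + (a^4+a^2)*4) * 1
        + 0) b := by
      exact ((((((hasDerivAt_pow 4 b).const_mul _).add
        ((hasDerivAt_pow 3 b).const_mul _)).add
        ((hasDerivAt_pow 2 b).const_mul _)).add
        ((hasDerivAt_id b).const_mul _)).add_const _).congr_deriv (by push_cast; ring)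
    have heq : (fun b' => rPoly a b') = (fun b' : ℝ =>
        ((a^6+1) + (a^5+a)*4 + (a^4+a^2)*5 + a^3*4) * b'^4
        + ((a^5+a)*(-8) + (a^4+a^2)*(-4)) * b'^3
        + ((a^6+1)*2 + (a^4+a^2)*2) * b'^2
        + ((a^5+a)*(-8) + (a^4+a^2)*4) * b'
        + ((a^6+1) + (a^5+a)*(-4) + (a^4+a^2)*5 + a^3*(-4))) := by
      funext x; unfold rPoly; ring
    rw [heq]
    exact h.congr_deriv (by ring)
  rw [hd.deriv]
  have hb0 : (0:ℝ) < b := lt_trans one_pos hb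
  have hb1 : (0:ℝ) ≤ b - 1 := by linarith
  have ha5 : (0:ℝ) ≤ a^5 + a := by positivity
  nlinarith [mul_nonneg ha5 (mul_nonneg (sq_nonneg (b-1)) (by linarith : (0:ℝ) ≤ 2*b+1)),
    mul_nonneg (by positivity : (0:ℝ) ≤ a^6+1) (mul_nonneg hb1 (by positivity : (0:ℝ) ≤ b^2+b+2)),
    mul_nonneg (by positivity : (0:ℝ) ≤ a^4+a^2) (mul_nonneg hb1 (by positivity : (0:ℝ) ≤ 5*b^2+2*b+3)),
    mul_pos (pow_pos ha 3) (show (0:ℝ) < b^3 - 1 by nlinarith [mul_pos (sub_pos.2 hb) (show (0:ℝ) < b^2+b+1 by positivity)]),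
    sq_nonneg (a^3-a^2), sq_nonneg (a^2+a), sq_nonneg (a-1)]
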